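/- Instantiation extension: if Γ ⊢ α̂ :≤ τ ⊣ Δ or Γ ⊢ τ ≤: α̂ ⊣ Δ, then Γ ⟶ Δ. -/

import Mathlib

set_option autoImplicit true

namespace DK

/-- Types, possibly containing existential type variables α̂:
    1 | α | α̂ | A → B | ∀α. A. -/
inductive ATy : Type where
  | unit : ATy
  | uvar : ℕ → ATy
  | evar : ℕ → ATy
  | arr : ATy → ATy → ATy
  | all : ℕ → ATy → ATy

/-- Monotypes: types containing no quantifiers. -/
def ATy.mono : ATy → Prop
  | .unit => True
  | .uvar _ => True
  | .evar _ => True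
  | .arr A B => A.mono ∧ B.mono
  | .all _ _ => False

/-- Free universal type variables. -/
def ATy.fvU : ATy → Finset ℕ
  | .unit => ∅
  | .uvar a => {a}
  | .evar _ => ∅
  | .arr A B => A.fvU ∪ B.fvU
  | .all a A => A.fvU.erase a

/-- Free existential type variables. -/
def ATy.fvE : ATy → Finset ℕ
  | .unit => ∅
  | .uvar _ => ∅
  | .evar a => {a}
  | .arr A B => A.fvE ∪ B.fvE
  | .all _ A => A.fvE

/-- `A.substE τ a` is [τ/α̂]A : substitution for the existential variable α̂ = a. -/
def ATy.substE : ATy → ATy → ℕ → ATy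
  | .unit, _, _ => .unit
  | .uvar b, _, _ => .uvar b
  | .evar b, τ, a => if b = a then τ else .evar b
  | .arr A B, τ, a => .arr (A.substE τ a) (B.substE τ a)
  | .all b A, τ, a => .all b (A.substE τ a)

/-- `A.substU τ a` is [τ/α]A : substitution for the universal variable α = a. -/
def ATy.substU : ATy → ATy → ℕ → ATy
  | .unit, _, _ => .unit
  | .uvar b, τ, a => if b = a then τ else .uvar b
  | .evar b, _, _ => .evar b
  | .arr A B, τ, a => .arr (A.substU τ a) (B.substU τ a)
  | .all b A, τ, a => .all b (if b = a then A else A.substU τ a)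

/-- Algorithmic context declarations: α, x:A, α̂, α̂=τ, ▸α̂. -/
inductive ADecl : Type where
  | tvar : ℕ → ADecl
  | var : ℕ → ATy → ADecl
  | evar : ℕ → ADecl
  | solved : ℕ → ATy → ADecl
  | marker : ℕ → ADecl

/-- Algorithmic contexts; the most recent declaration is the head
    (so "Γ, α̂" is `ADecl.evar α̂ :: Γ`). -/
abbrev ACtx := List ADecl

/-- [Γ]A : apply the context Γ as a substitution to A, recursively replacing each
    solved existential variable by its solution. -/
def applyCtx : ACtx → ATy → ATy
  | [], A => A
  | ADecl.solved a τ :: Γ, A => applyCtx Γ (A.substE τ a)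
  | _ :: Γ, A => applyCtx Γ A

/-- The existential variable a is declared (solved or unsolved) in Γ. -/
def ACtx.hasEvar (Γ : ACtx) (a : ℕ) : Prop :=
  ADecl.evar a ∈ Γ ∨ ∃ τ, ADecl.solved a τ ∈ Γ

/-- Well-formedness Γ ⊢ A: every universal variable of A is declared in Γ and
    every existential variable of A is declared (solved or unsolved) in Γ. -/
def AWf (Γ : ACtx) (A : ATy) : Prop :=
  (∀ a ∈ A.fvU, ADecl.tvar a ∈ Γ) ∧ (∀ a ∈ A.fvE, Γ.hasEvar a)

/-- Freshness: the name a is not declared in any way in Γ. -/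
def ACtx.fresh (Γ : ACtx) (a : ℕ) : Prop :=
  ADecl.tvar a ∉ Γ ∧ ADecl.evar a ∉ Γ ∧ (∀ τ, ADecl.solved a τ ∉ Γ) ∧
    ADecl.marker a ∉ Γ ∧ (∀ x A, ADecl.var x A ∈ Γ → x ≠ a)

/-- Context extension Γ ⟶ Δ. -/
inductive Extend : ACtx → ACtx → Prop where
  | nil : Extend [] []
  | var : Extend Γ Δ → applyCtx Δ A = applyCtx Δ A' →
      Extend (ADecl.var x A :: Γ) (ADecl.var x A' :: Δ)
  | tvar : Extend Γ Δ → Extend (ADecl.tvar a :: Γ) (ADecl.tvar a :: Δ)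
  | evar : Extend Γ Δ → Extend (ADecl.evar a :: Γ) (ADecl.evar a :: Δ)
  | solved : Extend Γ Δ → applyCtx Δ τ = applyCtx Δ τ' →
      Extend (ADecl.solved a τ :: Γ) (ADecl.solved a τ' :: Δ)
  | marker : Extend Γ Δ → Extend (ADecl.marker a :: Γ) (ADecl.marker a :: Δ)
  | solve : Extend Γ Δ → Extend (ADecl.evar a :: Γ) (ADecl.solved a τ :: Δ)
  | add : Extend Γ Δ → Extend Γ (ADecl.evar a :: Δ)
  | addSolved : Extend Γ Δ → Extend Γ (ADecl.solved a τ :: Δ)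

mutual
/-- Instantiation Γ ⊢ α̂ :≤ A ⊣ Δ. -/
inductive InstL : ACtx → ℕ → ATy → ACtx → Prop where
  | solve : ∀ {ΓL ΓR : ACtx} {a : ℕ} {τ : ATy}, ATy.mono τ → AWf ΓL τ →
      InstL (ΓR ++ ADecl.evar a :: ΓL) a τ (ΓR ++ ADecl.solved a τ :: ΓL)
  | reach : ∀ {Γ₂ Γ₁ Γ₀ : ACtx} {a b : ℕ},
      InstL (Γ₂ ++ ADecl.evar b :: Γ₁ ++ ADecl.evar a :: Γ₀) a (ATy.evar b)
        (Γ₂ ++ ADecl.solved b (ATy.evar a) :: Γ₁ ++ ADecl.evar a :: Γ₀)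
  | arr : ∀ {ΓL ΓR Θ Δ : ACtx} {a a₁ a₂ : ℕ} {A₁ A₂ : ATy},
      ACtx.fresh (ΓR ++ ADecl.evar a :: ΓL) a₁ →
      ACtx.fresh (ΓR ++ ADecl.evar a :: ΓL) a₂ → a₁ ≠ a₂ →
      InstR (ΓR ++ ADecl.solved a (ATy.arr (.evar a₁) (.evar a₂)) ::
             ADecl.evar a₁ :: ADecl.evar a₂ :: ΓL) A₁ a₁ Θ →
      InstL Θ a₂ (applyCtx Θ A₂) Δ →
      InstL (ΓR ++ ADecl.evar a :: ΓL) a (ATy.arr A₁ A₂) Δ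
  | allR : ∀ {Γ Δ Δ' : ACtx} {a b : ℕ} {B : ATy},
      ACtx.fresh Γ b →
      InstL (ADecl.tvar b :: Γ) a B (Δ' ++ ADecl.tvar b :: Δ) →
      InstL Γ a (ATy.all b B) Δ

/-- Instantiation Γ ⊢ A ≤: α̂ ⊣ Δ. -/
inductive InstR : ACtx → ATy → ℕ → ACtx → Prop where
  | solve : ∀ {ΓL ΓR : ACtx} {a : ℕ} {τ : ATy}, ATy.mono τ → AWf ΓL τ →
      InstR (ΓR ++ ADecl.evar a :: ΓL) τ a (ΓR ++ ADecl.solved a τ :: ΓL)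
  | reach : ∀ {Γ₂ Γ₁ Γ₀ : ACtx} {a b : ℕ},
      InstR (Γ₂ ++ ADecl.evar b :: Γ₁ ++ ADecl.evar a :: Γ₀) (ATy.evar b) a
        (Γ₂ ++ ADecl.solved b (ATy.evar a) :: Γ₁ ++ ADecl.evar a :: Γ₀)
  | arr : ∀ {ΓL ΓR Θ Δ : ACtx} {a a₁ a₂ : ℕ} {A₁ A₂ : ATy},
      ACtx.fresh (ΓR ++ ADecl.evar a :: ΓL) a₁ →
      ACtx.fresh (ΓR ++ ADecl.evar a :: ΓL) a₂ → a₁ ≠ a₂ →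
      InstL (ΓR ++ ADecl.solved a (ATy.arr (.evar a₁) (.evar a₂)) ::
             ADecl.evar a₁ :: ADecl.evar a₂ :: ΓL) a₁ A₁ Θ →
      InstR Θ (applyCtx Θ A₂) a₂ Δ →
      InstR (ΓR ++ ADecl.evar a :: ΓL) (ATy.arr A₁ A₂) a Δ
  | allL : ∀ {Γ Δ Δ' : ACtx} {a b bh : ℕ} {B : ATy},
      ACtx.fresh Γ bh →
      InstR (ADecl.evar bh :: ADecl.marker bh :: Γ)
        (B.substU (ATy.evar bh) b) a (Δ' ++ ADecl.marker bh :: Δ) →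
      InstR Γ (ATy.all b B) a Δ
end

/-- Algorithmic subtyping Γ ⊢ A <: B ⊣ Δ. -/
inductive ASub : ACtx → ATy → ATy → ACtx → Prop where
  | uvar : ADecl.tvar a ∈ Γ → ASub Γ (.uvar a) (.uvar a) Γ
  | unit : ASub Γ .unit .unit Γ
  | exvar : ADecl.evar a ∈ Γ → ASub Γ (.evar a) (.evar a) Γ
  | arr : ASub Γ B₁ A₁ Θ → ASub Θ (applyCtx Θ A₂) (applyCtx Θ B₂) Δ →
      ASub Γ (.arr A₁ A₂) (.arr B₁ B₂) Δ
  | allL : ACtx.fresh Γ ah →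
      ASub (ADecl.evar ah :: ADecl.marker ah :: Γ) (A.substU (.evar ah) a) B
        (Θ ++ ADecl.marker ah :: Δ) →
      ASub Γ (.all a A) B Δ
  | allR : ASub (ADecl.tvar b :: Γ) A B (Θ ++ ADecl.tvar b :: Δ) →
      ASub Γ A (.all b B) Δ
  | instL : ADecl.evar a ∈ Γ → a ∉ A.fvE → InstL Γ a A Δ →
      ASub Γ (.evar a) A Δ
  | instR : ADecl.evar a ∈ Γ → a ∉ A.fvE → InstR Γ A a Δ →
      ASub Γ A (.evar a) Δ

end DK

/-!
Instantiation only solves unsolved existentials and inserts fresh ones, keeping every other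
declaration verbatim. This syntactic relation `EvarExtend` is transitive, which the `→` cases
need as they chain two instantiations, and it implies `Extend`. In the `∀` cases the premise's
output has the form `Δ' ++ d :: Δ` for the pushed universal variable or marker `d`; since `d` is
not existential and is fresh for the input, it can only be the copy of the pushed one, so `Δ`
extends the input.
-/

theorem List.eq_of_append_cons_eq_of_not_mem {α : Type*} {a : α} :
    ∀ {x₁ x₂ z₁ z₂ : List α}, a ∉ x₁ → a ∉ z₁ → x₁ ++ a :: z₁ = x₂ ++ a :: z₂ → z₁ = z₂
  | [], [], _, _, _, _, h => (List.cons.inj h).2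
  | [], _ :: _, _, _, _, hz, h => by
    obtain ⟨rfl, rfl⟩ := List.cons.inj h
    simp at hz
  | _ :: _, [], _, _, hx, _, h => absurd ((List.cons.inj h).1 ▸ List.mem_cons_self) hx
  | _ :: _, _ :: _, _, _, hx, hz, h =>
    List.eq_of_append_cons_eq_of_not_mem (List.not_mem_of_not_mem_cons hx) hz (List.cons.inj h).2

namespace DK

def ADecl.IsExistential : ADecl → Prop
  | .evar _ => True
  | .solved _ _ => True
  | _ => False

inductive EvarExtend : ACtx → ACtx → Prop where
  | nil : EvarExtend [] []
  | keep : EvarExtend Γ Δ → EvarExtend (d :: Γ) (d :: Δ)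
  | solve : EvarExtend Γ Δ → EvarExtend (ADecl.evar a :: Γ) (ADecl.solved a τ :: Δ)
  | add : EvarExtend Γ Δ → EvarExtend Γ (ADecl.evar a :: Δ)
  | addSolved : EvarExtend Γ Δ → EvarExtend Γ (ADecl.solved a τ :: Δ)

namespace EvarExtend

theorem refl : ∀ Γ : ACtx, EvarExtend Γ Γ
  | [] => .nil
  | _ :: Γ => .keep (refl Γ)

theorem trans {Γ Δ Θ : ACtx} (h₁ : EvarExtend Γ Δ) (h₂ : EvarExtend Δ Θ) : EvarExtend Γ Θ := by
  induction h₂ generalizing Γ with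
  | nil => exact h₁
  | keep _ ih =>
    cases h₁ with
    | keep h₁ => exact .keep (ih h₁)
    | solve h₁ => exact .solve (ih h₁)
    | add h₁ => exact .add (ih h₁)
    | addSolved h₁ => exact .addSolved (ih h₁)
  | solve _ ih =>
    cases h₁ with
    | keep h₁ => exact .solve (ih h₁)
    | add h₁ => exact .addSolved (ih h₁)
  | add _ ih => exact .add (ih h₁)
  | addSolved _ ih => exact .addSolved (ih h₁)

theorem append_left : ∀ (L : ACtx) {Γ Δ : ACtx}, EvarExtend Γ Δ → EvarExtend (L ++ Γ) (L ++ Δ)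
  | [], _, _, h => h
  | _ :: L, _, _, h => .keep (append_left L h)

theorem solve_mid (L : ACtx) {Γ Δ : ACtx} {a : ℕ} {τ : ATy} (h : EvarExtend Γ Δ) :
    EvarExtend (L ++ ADecl.evar a :: Γ) (L ++ ADecl.solved a τ :: Δ) :=
  append_left L (.solve h)

theorem extend {Γ Δ : ACtx} (h : EvarExtend Γ Δ) : Extend Γ Δ := by
  induction h with
  | nil => exact .nil
  | @keep _ _ d _ ih =>
    cases d with
    | tvar => exact .tvar ih
    | var => exact .var ih rfl
    | evar => exact .evar ih
    | solved => exact .solved ih rfl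
    | marker => exact .marker ih
  | solve _ ih => exact .solve ih
  | add _ ih => exact .add ih
  | addSolved _ ih => exact .addSolved ih

theorem mem_of_mem {Γ Δ : ACtx} (h : EvarExtend Γ Δ) {d : ADecl} (hd : d ∈ Δ) :
    d ∈ Γ ∨ d.IsExistential := by
  induction h with
  | nil => exact .inl hd
  | keep _ ih =>
    rcases List.mem_cons.1 hd with rfl | hd
    · exact .inl List.mem_cons_self
    · exact (ih hd).imp_left (List.mem_cons_of_mem _)
  | solve _ ih =>
    rcases List.mem_cons.1 hd with rfl | hd
    · exact .inr trivial
    · exact (ih hd).imp_left (List.mem_cons_of_mem _)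
  | add _ ih | addSolved _ ih =>
    rcases List.mem_cons.1 hd with rfl | hd
    · exact .inr trivial
    · exact ih hd

theorem split_append_cons {d : ADecl} (hd : ¬ d.IsExistential) {Γ Ω : ACtx} :
    ∀ {L : ACtx}, EvarExtend (L ++ d :: Γ) Ω →
      ∃ Δ₀ Δ, Ω = Δ₀ ++ d :: Δ ∧ EvarExtend L Δ₀ ∧ EvarExtend Γ Δ := by
  intro L h
  generalize hG : L ++ d :: Γ = G at h
  induction h generalizing L with
  | nil => exact absurd hG (by simp)
  | @keep _ Ω _ h ih =>
    cases L with
    | nil =>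
      obtain ⟨rfl, rfl⟩ := List.cons.inj hG
      exact ⟨[], Ω, rfl, .nil, h⟩
    | cons l L =>
      rw [List.cons_append, List.cons.injEq] at hG
      obtain ⟨rfl, hG⟩ := hG
      obtain ⟨Δ₀, Δ, rfl, hL, hΓ⟩ := ih hG
      exact ⟨l :: Δ₀, Δ, rfl, .keep hL, hΓ⟩
  | solve _ ih =>
    cases L with
    | nil => exact absurd ((List.cons.inj hG).1 ▸ trivial) hd
    | cons l L =>
      rw [List.cons_append, List.cons.injEq] at hG
      obtain ⟨rfl, hG⟩ := hG
      obtain ⟨Δ₀, Δ, rfl, hL, hΓ⟩ := ih hG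
      exact ⟨_ :: Δ₀, Δ, rfl, .solve hL, hΓ⟩
  | add _ ih =>
    obtain ⟨Δ₀, Δ, rfl, hL, hΓ⟩ := ih hG
    exact ⟨_ :: Δ₀, Δ, rfl, .add hL, hΓ⟩
  | addSolved _ ih =>
    obtain ⟨Δ₀, Δ, rfl, hL, hΓ⟩ := ih hG
    exact ⟨_ :: Δ₀, Δ, rfl, .addSolved hL, hΓ⟩

theorem of_append_cons {d : ADecl} (hd : ¬ d.IsExistential) {L Γ Δ' Δ : ACtx}
    (hL : d ∉ L) (hΓ : d ∉ Γ) (h : EvarExtend (L ++ d :: Γ) (Δ' ++ d :: Δ)) :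
    EvarExtend Γ Δ := by
  obtain ⟨Δ₀, Δ₁, hΩ, hL₀, hΓ₁⟩ := split_append_cons hd h
  have hΔ₀ : d ∉ Δ₀ := fun hmem => (hL₀.mem_of_mem hmem).elim hL hd
  have hΔ₁ : d ∉ Δ₁ := fun hmem => (hΓ₁.mem_of_mem hmem).elim hΓ hd
  rwa [List.eq_of_append_cons_eq_of_not_mem hΔ₀ hΔ₁ hΩ.symm] at hΓ₁

end EvarExtend

mutual
theorem InstL.evarExtend {Γ Δ : ACtx} {a : ℕ} {A : ATy} :
    InstL Γ a A Δ → EvarExtend Γ Δ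
  | .solve (ΓR := ΓR) _ _ => .solve_mid ΓR (.refl _)
  | .reach (Γ₂ := Γ₂) => by
    simp only [List.append_assoc, List.cons_append]
    exact .solve_mid Γ₂ (.refl _)
  | .arr (ΓR := ΓR) _ _ _ h₁ h₂ =>
    ((EvarExtend.solve_mid ΓR (.add (.add (.refl _)))).trans h₁.evarExtend).trans h₂.evarExtend
  | .allR hb h => h.evarExtend.of_append_cons id List.not_mem_nil hb.1

theorem InstR.evarExtend {Γ Δ : ACtx} {a : ℕ} {A : ATy} :
    InstR Γ A a Δ → EvarExtend Γ Δ
  | .solve (ΓR := ΓR) _ _ => .solve_mid ΓR (.refl _)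
  | .reach (Γ₂ := Γ₂) => by
    simp only [List.append_assoc, List.cons_append]
    exact .solve_mid Γ₂ (.refl _)
  | .arr (ΓR := ΓR) _ _ _ h₁ h₂ =>
    ((EvarExtend.solve_mid ΓR (.add (.add (.refl _)))).trans h₁.evarExtend).trans h₂.evarExtend
  | .allL hb h =>
    EvarExtend.of_append_cons (L := [ADecl.evar _]) id (by simp) hb.2.2.2.1 h.evarExtend
end

/-- Instantiation extension: if Γ ⊢ α̂ :≤ τ ⊣ Δ or Γ ⊢ τ ≤: α̂ ⊣ Δ then Γ ⟶ Δ. -/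
theorem instantiation_extension (Γ Δ : ACtx) (a : ℕ) (τ : ATy)
    (h : InstL Γ a τ Δ ∨ InstR Γ τ a Δ) : Extend Γ Δ :=
  h.elim (fun h => h.evarExtend.extend) (fun h => h.evarExtend.extend)

end DK
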